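/- Let X be a topological space, V a subset of {(a,u) ∈ ℝ×ℂ : a ≥ |u|}, and h : V → X a map such that h ∘ β is continuous on β⁻¹(V), where β(z) = (½∑|zₖ|², z₁z₄−z₂z₃). Then h is continuous. -/

import Mathlib

noncomputable def β (z : ℂ × ℂ × ℂ × ℂ) : ℝ × ℂ :=
  ((‖z.1‖ ^ 2 + ‖z.2.1‖ ^ 2 + ‖z.2.2.1‖ ^ 2 +
      ‖z.2.2.2‖ ^ 2) / 2,
    z.1 * z.2.2.2 - z.2.1 * z.2.2.1)

noncomputable def gt (p : ℝ × ℂ) : ℝ :=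
  Real.sqrt (p.1 + Real.sqrt (p.1 ^ 2 - ‖p.2‖ ^ 2))

noncomputable def g (p : ℝ × ℂ) : ℂ × ℂ × ℂ × ℂ :=
  (p.2 / (gt p : ℂ), 0, 0, ((gt p : ℝ) : ℂ))

lemma beta_g {p : ℝ × ℂ} (hp : ‖p.2‖ ≤ p.1) : β (g p) = p := by
  obtain ⟨a, u⟩ := p
  simp only at hp
  have hu0 : (0:ℝ) ≤ ‖u‖ := norm_nonneg u
  have ha0 : (0:ℝ) ≤ a := le_trans hu0 hp
  set s : ℝ := Real.sqrt (a ^ 2 - ‖u‖ ^ 2) with hs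
  have hsub : (0:ℝ) ≤ a ^ 2 - ‖u‖ ^ 2 := by nlinarith
  have hs0 : (0:ℝ) ≤ s := Real.sqrt_nonneg _
  have hs2 : s ^ 2 = a ^ 2 - ‖u‖ ^ 2 := Real.sq_sqrt hsub
  have ht : gt (a, u) = Real.sqrt (a + s) := rfl
  have ht0 : (0:ℝ) ≤ gt (a, u) := Real.sqrt_nonneg _
  have ht2 : gt (a, u) ^ 2 = a + s := by
    rw [ht]; exact Real.sq_sqrt (by positivity)
  set t := gt (a, u) with htd
  by_cases h0 : t = 0
  · have has : a + s = 0 := by rw [← ht2, h0]; ring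
    have ha : a = 0 := by nlinarith
    have hu : ‖u‖ = 0 := le_antisymm (ha ▸ hp) hu0
    have hu' : u = 0 := by simpa using hu
    have hg : g (a, u) = (0, 0, 0, 0) := by
      have hgr : g (a, u) = (u / ((t:ℝ):ℂ), 0, 0, ((t:ℝ):ℂ)) := rfl
      rw [hgr, h0, hu']
      simp
    rw [hg]
    simp [β, ha, hu', Prod.ext_iff]
  · have htpos : 0 < t := lt_of_le_of_ne ht0 (Ne.symm h0)
    have htC : ((t : ℂ)) ≠ 0 := by exact_mod_cast h0
    have habs : ‖((t : ℂ))‖ = t := by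
      rw [Complex.norm_real, Real.norm_eq_abs, abs_of_pos htpos]
    unfold β g
    simp only [← htd]
    refine Prod.ext ?_ ?_
    · simp only [norm_div, habs, norm_zero]
      have hne : a + s ≠ 0 := by rw [← ht2]; positivity
      have : ‖u‖ ^ 2 / t ^ 2 = a - s := by
        rw [ht2]
        have h2 : ‖u‖ ^ 2 = (a - s) * (a + s) := by nlinarith
        rw [h2, mul_div_assoc, div_self hne, mul_one]
      simp only [div_pow, this]
      ring_nf
      nlinarith [this]
    · show (u / ((t:ℝ):ℂ)) * ((t:ℝ):ℂ) - 0 * 0 = u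
      field_simp
      simp

lemma gt_continuous : Continuous gt := by
  unfold gt
  exact Real.continuous_sqrt.comp (continuous_fst.add (Real.continuous_sqrt.comp
    ((continuous_fst.pow 2).sub ((continuous_norm.comp continuous_snd).pow 2))))

lemma gt_pos {p : ℝ × ℂ} (hp : ‖p.2‖ ≤ p.1) (hne : p ≠ (0, 0)) :
    0 < gt p := by
  have hu0 : (0:ℝ) ≤ ‖p.2‖ := norm_nonneg _
  have ha0 : (0:ℝ) ≤ p.1 := le_trans hu0 hp
  have ha : 0 < p.1 := by
    rcases lt_or_eq_of_le ha0 with h | h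
    · exact h
    · exfalso
      have hu : ‖p.2‖ = 0 := le_antisymm (h ▸ hp) hu0
      have : p.2 = 0 := by simpa using hu
      exact hne (Prod.ext h.symm this)
  have : 0 < p.1 + Real.sqrt (p.1 ^ 2 - ‖p.2‖ ^ 2) := by
    have := Real.sqrt_nonneg (p.1 ^ 2 - ‖p.2‖ ^ 2)
    linarith
  exact Real.sqrt_pos.mpr this

lemma g_contOn : ContinuousOn g {p : ℝ × ℂ | ‖p.2‖ ≤ p.1} := by
  set S := {p : ℝ × ℂ | ‖p.2‖ ≤ p.1} with hS
  have h4 : Continuous fun p : ℝ × ℂ => ((gt p : ℝ) : ℂ) :=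
    Complex.continuous_ofReal.comp gt_continuous
  have h1 : ContinuousOn (fun p : ℝ × ℂ => p.2 / ((gt p : ℝ) : ℂ)) S := by
    intro p hp
    by_cases hne : p = (0, 0)
    · subst hne
      -- squeeze: ‖u / t‖ ≤ √a on S
      have hb : ∀ q ∈ S, ‖q.2 / ((gt q : ℝ) : ℂ)‖ ≤ Real.sqrt q.1 := by
        intro q hq
        have hq' : ‖q.2‖ ≤ q.1 := hq
        have hu0 : (0:ℝ) ≤ ‖q.2‖ := norm_nonneg _
        have ha0 : (0:ℝ) ≤ q.1 := le_trans hu0 hq'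
        by_cases h0 : gt q = 0
        · by_cases hq0 : q = (0, 0)
          · subst hq0; simp
          · exact absurd h0 (ne_of_gt (gt_pos hq' hq0))
        · have htpos : 0 < gt q := lt_of_le_of_ne (Real.sqrt_nonneg _) (Ne.symm h0)
          have hnorm : ‖q.2 / ((gt q : ℝ) : ℂ)‖ = ‖q.2‖ / gt q := by
            rw [norm_div, Complex.norm_real,
              Real.norm_eq_abs, abs_of_pos htpos]
          rw [hnorm, div_le_iff₀ htpos]
          set s : ℝ := Real.sqrt (q.1 ^ 2 - ‖q.2‖ ^ 2) with hs
          have hsub : (0:ℝ) ≤ q.1 ^ 2 - ‖q.2‖ ^ 2 := by nlinarith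
          have hs2 : s ^ 2 = q.1 ^ 2 - ‖q.2‖ ^ 2 := Real.sq_sqrt hsub
          have hs0 : (0:ℝ) ≤ s := Real.sqrt_nonneg _
          have ht2 : gt q ^ 2 = q.1 + s := Real.sq_sqrt (by positivity)
          have hsq : (Real.sqrt q.1) ^ 2 = q.1 := Real.sq_sqrt ha0
          nlinarith [Real.sqrt_nonneg q.1, sq_nonneg (‖q.2‖ - Real.sqrt q.1 * gt q)]
      have hsqrt : Filter.Tendsto (fun q : ℝ × ℂ => Real.sqrt q.1)
          (nhdsWithin ((0:ℝ), (0:ℂ)) S) (nhds 0) := by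
        have : Continuous fun q : ℝ × ℂ => Real.sqrt q.1 := by fun_prop
        have h2 : Filter.Tendsto (fun q : ℝ × ℂ => Real.sqrt q.1)
            (nhdsWithin ((0:ℝ), (0:ℂ)) S) (nhds (Real.sqrt ((0:ℝ), (0:ℂ)).1)) :=
          (this.tendsto _).mono_left nhdsWithin_le_nhds
        simpa using h2
      have : Filter.Tendsto (fun q : ℝ × ℂ => q.2 / ((gt q : ℝ) : ℂ))
          (nhdsWithin ((0:ℝ), (0:ℂ)) S) (nhds 0) := by
        refine squeeze_zero_norm' ?_ hsqrt
        filter_upwards [self_mem_nhdsWithin] with q hq using hb q hq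
      have hval : ((0:ℝ), (0:ℂ)).2 / ((gt ((0:ℝ), (0:ℂ)) : ℝ) : ℂ) = 0 := by simp
      unfold ContinuousWithinAt
      simp only [hval]
      convert this using 2
    · have hne' : ((gt p : ℝ) : ℂ) ≠ 0 := by
        exact_mod_cast ne_of_gt (gt_pos hp hne)
      exact (continuous_snd.continuousAt.div (h4.continuousAt) hne').continuousWithinAt
  exact h1.prodMk (continuousOn_const.prodMk (continuousOn_const.prodMk h4.continuousOn))

theorem continuous_of_comp_beta {X : Type*} [TopologicalSpace X]
    (V : Set (ℝ × ℂ)) (hV : V ⊆ {p : ℝ × ℂ | ‖p.2‖ ≤ p.1})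
    (h : ℝ × ℂ → X) (hcont : ContinuousOn (h ∘ β) (β ⁻¹' V)) :
    ContinuousOn h V := by
  have hmaps : Set.MapsTo g V (β ⁻¹' V) := by
    intro q hq
    simp only [Set.mem_preimage, beta_g (hV hq)]
    exact hq
  intro p hp
  have hcw : ContinuousWithinAt ((h ∘ β) ∘ g) V p :=
    (hcont (g p) (hmaps hp)).comp ((g_contOn p (hV hp)).mono hV) hmaps
  refine hcw.congr (fun q hq => ?_) ?_
  · simp [Function.comp, beta_g (hV hq)]
  · simp [Function.comp, beta_g (hV hp)]
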